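/- arXiv:1304.8102 — 2 statements merged into one kernel-verified Lean document; each statement's English description precedes it below -/
import Mathlib

section
/- Let n ≥ 1, let 0 < σ₁ ≤ σ₂, and let μ be a Borel probability measure on ℝ supported in [σ₁, σ₂]. Let f be the SIRP noise density f(x) = ∫ (2πσ²)^{−n/2} exp(−‖x‖²/(2σ²)) dμ(σ). Suppose Metric.closedBall 0 d_min ⊆ Ω_i ⊆ Metric.closedBall 0 d_max for every i, with 0 < d_min ≤ d_max (distances of the normalized constellation, corresponding to unit signal power). Then the symbol error rate as a function of the signal power p_s, namely P_e(p_s) = 1 − Σ_{i=1}^{M} q_i ∫_{√p_s • Ω_i} f(x) dx, is convex on {p_s : p_s > 0 and p_s ≥ (n−2)σ₂²/d_min²} and concave on (0, (n−2)σ₁²/d_max²]. -/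
/-!
In polar coordinates the probability of a correct decision in region `i` becomes
`∫_{S^{n-1}} G(√p_s R_i(θ)) dθ`, where `R_i` is the radial function of `Ω_i`,
`G(u) = ∫_0^u r^{n-1} g(r) dr` and `f(x) = g(‖x‖)`. The derivative of `p ↦ G(√p ρ)` is
`ρ^n/2 · p^{n/2-1} g(√p ρ)`, a `μ`-mixture of the functions `p^{n/2-1} e^{-ρ² p/(2σ²)}`, each of
which increases up to `p = (n-2)σ²/ρ²` and decreases afterwards. For `ρ ∈ [d_min, d_max]` and
`σ ∈ [σ₁, σ₂]` this makes `p ↦ G(√p ρ)` concave for `p ≥ (n-2)σ₂²/d_min²` and convex for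
`p ≤ (n-2)σ₁²/d_max²`, and both properties survive the integral over `θ` and the weighted sum
over `i`.
-/

open MeasureTheory Real Set Pointwise Metric
open scoped ENNReal

section FinsetSum

variable {ι 𝕜 E β : Type*} [Semiring 𝕜] [PartialOrder 𝕜] [AddCommMonoid E] [AddCommMonoid β]
  [PartialOrder β] [IsOrderedAddMonoid β] [SMul 𝕜 E] [Module 𝕜 β] {s : Set E} {f : ι → E → β}

lemma convexOn_finset_sum (t : Finset ι) (hs : Convex 𝕜 s) (h : ∀ i ∈ t, ConvexOn 𝕜 s (f i)) :
    ConvexOn 𝕜 s fun x => ∑ i ∈ t, f i x := by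
  classical
  induction t using Finset.induction_on with
  | empty => simpa using convexOn_const (0 : β) hs
  | insert a t hat ih =>
    simp only [Finset.sum_insert hat]
    exact (h a (Finset.mem_insert_self a t)).add (ih fun i hi => h i (Finset.mem_insert_of_mem hi))

lemma concaveOn_finset_sum (t : Finset ι) (hs : Convex 𝕜 s) (h : ∀ i ∈ t, ConcaveOn 𝕜 s (f i)) :
    ConcaveOn 𝕜 s fun x => ∑ i ∈ t, f i x :=
  convexOn_finset_sum (β := βᵒᵈ) t hs h

end FinsetSum

lemma antitoneOn_rpow_mul_exp_neg_mul {α a : ℝ} (ha : 0 ≤ a) :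
    AntitoneOn (fun p => p ^ α * exp (-(a * p))) {p | 0 < p ∧ α ≤ a * p} := by
  rintro p ⟨hp, hαp⟩ q ⟨hq, -⟩ hpq
  simp only [rpow_def_of_pos hp, rpow_def_of_pos hq, ← exp_add, exp_le_exp]
  have hL : 0 ≤ log q - log p := sub_nonneg.2 (log_le_log hp hpq)
  have hLp : log q - log p ≤ q / p - 1 := by
    rw [← log_div hq.ne' hp.ne']; exact log_le_sub_one_of_pos (div_pos hq hp)
  rw [div_sub_one hp.ne', le_div_iff₀ hp] at hLp
  nlinarith [mul_le_mul_of_nonneg_right hαp hL, mul_le_mul_of_nonneg_left hLp ha]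

lemma monotoneOn_rpow_mul_exp_neg_mul {α a : ℝ} (ha : 0 ≤ a) :
    MonotoneOn (fun p => p ^ α * exp (-(a * p))) {p | 0 < p ∧ a * p ≤ α} := by
  rintro p ⟨hp, -⟩ q ⟨hq, hαq⟩ hpq
  simp only [rpow_def_of_pos hp, rpow_def_of_pos hq, ← exp_add, exp_le_exp]
  have hL : 0 ≤ log q - log p := sub_nonneg.2 (log_le_log hp hpq)
  have hLq : 1 - (q / p)⁻¹ ≤ log q - log p := by
    rw [← log_div hq.ne' hp.ne']; exact one_sub_inv_le_log_of_pos (div_pos hq hp)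
  rw [inv_div, one_sub_div hq.ne', div_le_iff₀ hq] at hLq
  nlinarith [mul_le_mul_of_nonneg_right hαq hL, mul_le_mul_of_nonneg_left hLq ha]

noncomputable def radialMass (k : ℕ) (g : ℝ → ℝ) (u : ℝ) : ℝ :=
  ∫ r in 0..u, r ^ k * g r

section RadialMass

variable {k : ℕ} {g : ℝ → ℝ}

lemma continuous_radialMass (hg : Continuous g) : Continuous (radialMass k g) :=
  intervalIntegral.continuous_primitive
    (fun _ _ => (by fun_prop : Continuous fun r => r ^ k * g r).intervalIntegrable _ _) 0

lemma radialMass_nonneg (hg0 : ∀ r, 0 ≤ g r) {u : ℝ} (hu : 0 ≤ u) : 0 ≤ radialMass k g u :=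
  intervalIntegral.integral_nonneg hu fun r hr => mul_nonneg (pow_nonneg hr.1 _) (hg0 r)

lemma hasDerivAt_radialMass_sqrt_mul (hg : Continuous g) {p : ℝ} (hp : 0 < p) (ρ : ℝ) :
    HasDerivAt (fun p => radialMass k g (√p * ρ))
      (ρ ^ (k + 1) / 2 * (p ^ (((k : ℝ) - 1) / 2) * g (√p * ρ))) p := by
  have hmass : HasDerivAt (radialMass k g) ((√p * ρ) ^ k * g (√p * ρ)) (√p * ρ) :=
    ((by fun_prop : Continuous fun r => r ^ k * g r).integral_hasStrictDerivAt 0 _).hasDerivAt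
  refine (hmass.comp p ((hasDerivAt_sqrt hp.ne').mul_const ρ)).congr_deriv ?_
  have hsqrt : 0 < √p := sqrt_pos.2 hp
  have hpow : p ^ (((k : ℝ) - 1) / 2) = √p ^ k / √p := by
    rw [sqrt_eq_rpow, ← rpow_natCast, ← rpow_mul hp.le, ← rpow_sub hp]
    ring_nf
  rw [hpow]
  field_simp
  ring

lemma concaveOn_radialMass_sqrt_mul (hg : Continuous g) {s : Set ℝ} (hs : Convex ℝ s)
    (hs0 : s ⊆ Ioi 0) {ρ : ℝ} (hρ : 0 ≤ ρ)
    (hanti : AntitoneOn (fun p => p ^ (((k : ℝ) - 1) / 2) * g (√p * ρ)) s) :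
    ConcaveOn ℝ s (fun p => radialMass k g (√p * ρ)) := by
  have hderiv (p : ℝ) (hp : p ∈ interior s) :=
    hasDerivAt_radialMass_sqrt_mul (k := k) hg (hs0 (interior_subset hp)) ρ
  refine AntitoneOn.concaveOn_of_deriv hs
    ((continuous_radialMass hg).comp (by fun_prop)).continuousOn
    (fun p hp => (hderiv p hp).differentiableAt.differentiableWithinAt) fun p hp q hq hpq => ?_
  rw [(hderiv p hp).deriv, (hderiv q hq).deriv]
  exact mul_le_mul_of_nonneg_left (hanti (interior_subset hp) (interior_subset hq) hpq)
    (by positivity)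

lemma convexOn_radialMass_sqrt_mul (hg : Continuous g) {s : Set ℝ} (hs : Convex ℝ s)
    (hs0 : s ⊆ Ioi 0) {ρ : ℝ} (hρ : 0 ≤ ρ)
    (hmono : MonotoneOn (fun p => p ^ (((k : ℝ) - 1) / 2) * g (√p * ρ)) s) :
    ConvexOn ℝ s (fun p => radialMass k g (√p * ρ)) := by
  have hderiv (p : ℝ) (hp : p ∈ interior s) :=
    hasDerivAt_radialMass_sqrt_mul (k := k) hg (hs0 (interior_subset hp)) ρ
  refine MonotoneOn.convexOn_of_deriv hs
    ((continuous_radialMass hg).comp (by fun_prop)).continuousOn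
    (fun p hp => (hderiv p hp).differentiableAt.differentiableWithinAt) fun p hp q hq hpq => ?_
  rw [(hderiv p hp).deriv, (hderiv q hq).deriv]
  exact mul_le_mul_of_nonneg_left (hmono (interior_subset hp) (interior_subset hq) hpq)
    (by positivity)

lemma radialMass_mono (hg : Continuous g) (hg0 : ∀ r, 0 ≤ g r) {u v : ℝ} (hu : 0 ≤ u)
    (huv : u ≤ v) : radialMass k g u ≤ radialMass k g v :=
  intervalIntegral.integral_mono_interval le_rfl hu huv
    (ae_restrict_of_forall_mem measurableSet_Ioc fun r hr =>
      mul_nonneg (pow_nonneg hr.1.le k) (hg0 r))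
    ((by fun_prop : Continuous fun r => r ^ k * g r).intervalIntegrable _ _)

end RadialMass

section Polar

variable {E : Type*} [NormedAddCommGroup E] [NormedSpace ℝ E]

/-- Junk value `0` (`Real.sSup`) when the ray misses `Ω` or is unbounded in it. -/
noncomputable def radialFunction (Ω : Set E) (θ : E) : ℝ :=
  sSup {r : ℝ | 0 < r ∧ r • θ ∈ Ω}

variable {Ω : Set E}

lemma radialFunction_nonneg (Ω : Set E) (θ : E) : 0 ≤ radialFunction Ω θ :=
  Real.sSup_nonneg fun _ hr => hr.1.le

lemma radialFunction_smul {t : ℝ} (ht : 0 < t) (Ω : Set E) (θ : E) :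
    radialFunction (t • Ω) θ = t * radialFunction Ω θ := by
  have hray : {r : ℝ | 0 < r ∧ r • θ ∈ t • Ω} = t • {r : ℝ | 0 < r ∧ r • θ ∈ Ω} := by
    ext r
    simp only [mem_ofPred_eq, mem_smul_set_iff_inv_smul_mem₀ ht.ne', smul_smul, smul_eq_mul,
      mul_pos_iff_of_pos_left (inv_pos.2 ht)]
  rw [radialFunction, hray, Real.sSup_smul_of_nonneg ht.le, smul_eq_mul, radialFunction]

lemma ray_subset_Ioc_radialFunction (hΩ : Bornology.IsBounded Ω) {θ : E} (hθ : ‖θ‖ = 1) :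
    {r : ℝ | 0 < r ∧ r • θ ∈ Ω} ⊆ Ioc 0 (radialFunction Ω θ) := by
  obtain ⟨b, hb⟩ := hΩ.exists_norm_le
  have hbdd : BddAbove {r : ℝ | 0 < r ∧ r • θ ∈ Ω} :=
    ⟨b, fun r ⟨hr, hrΩ⟩ => by simpa [norm_smul, hθ, abs_of_pos hr] using hb _ hrΩ⟩
  exact fun r hr => ⟨hr.1, le_csSup hbdd hr⟩

lemma Ioo_radialFunction_subset_ray (hΩ : StarConvex ℝ 0 Ω) (θ : E) :
    Ioo 0 (radialFunction Ω θ) ⊆ {r : ℝ | 0 < r ∧ r • θ ∈ Ω} := by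
  rintro r ⟨hr, hrR⟩
  have hne : {r : ℝ | 0 < r ∧ r • θ ∈ Ω}.Nonempty := by
    by_contra h
    rw [radialFunction, not_nonempty_iff_eq_empty.1 h, Real.sSup_empty] at hrR
    exact hr.not_gt hrR
  obtain ⟨b, ⟨hb, hbΩ⟩, hrb⟩ := exists_lt_of_lt_csSup hne hrR
  refine ⟨hr, ?_⟩
  simpa [smul_smul, div_mul_cancel₀ r hb.ne'] using
    hΩ.smul_mem hbΩ (div_pos hr hb).le ((div_le_one hb).2 hrb.le)

lemma ray_ae_eq_Ioc_radialFunction (hΩs : StarConvex ℝ 0 Ω) (hΩb : Bornology.IsBounded Ω)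
    {θ : E} (hθ : ‖θ‖ = 1) :
    {r : ℝ | 0 < r ∧ r • θ ∈ Ω} =ᵐ[volume] Ioc 0 (radialFunction Ω θ) :=
  (ray_subset_Ioc_radialFunction hΩb hθ).eventuallyLE.antisymm
    (Ioo_ae_eq_Ioc.symm.le.trans (Ioo_radialFunction_subset_ray hΩs θ).eventuallyLE)

lemma radialFunction_mem_Icc {a b : ℝ} (ha : 0 < a) (h₁ : closedBall 0 a ⊆ Ω)
    (h₂ : Ω ⊆ closedBall 0 b) {θ : E} (hθ : ‖θ‖ = 1) : radialFunction Ω θ ∈ Icc a b := by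
  have hnorm {r : ℝ} (hr : 0 < r) : ‖r • θ‖ = r := by simp [norm_smul, hθ, abs_of_pos hr]
  have haΩ : a • θ ∈ Ω := h₁ (by simp [hnorm ha])
  have hab : a ≤ b := by simpa [hnorm ha] using h₂ haΩ
  exact ⟨(ray_subset_Ioc_radialFunction (isBounded_closedBall.subset h₂) hθ ⟨ha, haΩ⟩).2,
    Real.sSup_le (fun r hr => by simpa [hnorm hr.1] using h₂ hr.2) (ha.le.trans hab)⟩

variable [MeasurableSpace E] [BorelSpace E] {g : ℝ → ℝ}

lemma lintegral_Ioi_indicator_comp_norm_smul (hΩm : MeasurableSet Ω) (hΩs : StarConvex ℝ 0 Ω)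
    (hΩb : Bornology.IsBounded Ω) (hg : Continuous g) (hg0 : ∀ r, 0 ≤ g r) {θ : E}
    (hθ : ‖θ‖ = 1) (k : ℕ) :
    ∫⁻ r in Ioi (0 : ℝ), ENNReal.ofReal (r ^ k) *
        Ω.indicator (fun x => ENNReal.ofReal (g ‖x‖)) (r • θ) =
      ENNReal.ofReal (radialMass k g (radialFunction Ω θ)) := by
  have hray : MeasurableSet {r : ℝ | 0 < r ∧ r • θ ∈ Ω} :=
    measurableSet_Ioi.inter (hΩm.preimage (by fun_prop))
  calc _ = ∫⁻ r in Ioi (0 : ℝ),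
        {r : ℝ | 0 < r ∧ r • θ ∈ Ω}.indicator (fun r => ENNReal.ofReal (r ^ k * g r)) r := by
        refine setLIntegral_congr_fun measurableSet_Ioi fun r (hr : 0 < r) => ?_
        by_cases hrΩ : r • θ ∈ Ω
        · simp [hrΩ, hr, norm_smul, hθ, abs_of_pos hr, ENNReal.ofReal_mul (pow_nonneg hr.le k)]
        · simp [hrΩ]
    _ = ∫⁻ r in Ioc 0 (radialFunction Ω θ), ENNReal.ofReal (r ^ k * g r) := by
        rw [lintegral_indicator hray, Measure.restrict_restrict hray,
          inter_eq_self_of_subset_left fun r hr => hr.1]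
        exact setLIntegral_congr (ray_ae_eq_Ioc_radialFunction hΩs hΩb hθ)
    _ = _ := by
        rw [← ofReal_integral_eq_lintegral_ofReal, radialMass,
          intervalIntegral.integral_of_le (radialFunction_nonneg Ω θ)]
        · exact ((by fun_prop : Continuous fun r => r ^ k * g r).integrableOn_Icc).mono_set
            Ioc_subset_Icc_self
        · filter_upwards [ae_restrict_mem measurableSet_Ioc] with r hr
          exact mul_nonneg (pow_nonneg hr.1.le k) (hg0 r)

variable [FiniteDimensional ℝ E]

lemma measurable_radialFunction (hΩm : MeasurableSet Ω) (hΩs : StarConvex ℝ 0 Ω)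
    (hΩb : Bornology.IsBounded Ω) :
    Measurable fun θ : sphere (0 : E) 1 => radialFunction Ω θ := by
  have hvol (θ : sphere (0 : E) 1) :
      volume {r : ℝ | 0 < r ∧ r • (θ : E) ∈ Ω} = ENNReal.ofReal (radialFunction Ω θ) := by
    rw [measure_congr (ray_ae_eq_Ioc_radialFunction hΩs hΩb (norm_eq_of_mem_sphere θ)),
      Real.volume_Ioc, sub_zero]
  have hm : MeasurableSet {q : sphere (0 : E) 1 × ℝ | 0 < q.2 ∧ q.2 • (q.1 : E) ∈ Ω} :=
    (measurableSet_lt measurable_const measurable_snd).inter (hΩm.preimage (by fun_prop))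
  convert (measurable_measure_prodMk_left (ν := volume) hm).ennreal_toReal with θ
  rw [preimage_ofPred_eq, hvol, ENNReal.toReal_ofReal (radialFunction_nonneg Ω θ)]

theorem lintegral_eq_lintegral_toSphere_lintegral_Ioi (μ : Measure E) [μ.IsAddHaarMeasure]
    [Nontrivial E] {F : E → ℝ≥0∞} (hF : Measurable F) :
    ∫⁻ x, F x ∂μ = ∫⁻ θ, (∫⁻ r in Ioi (0 : ℝ),
      ENNReal.ofReal (r ^ (Module.finrank ℝ E - 1)) * F (r • (θ : E))) ∂μ.toSphere := by
  have hFy : Measurable fun y : sphere (0 : E) 1 × Ioi (0 : ℝ) => F ((y.2 : ℝ) • (y.1 : E)) :=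
    hF.comp (by fun_prop)
  calc ∫⁻ x, F x ∂μ = ∫⁻ x : ({0}ᶜ : Set E), F x ∂μ.comap Subtype.val := by
        rw [lintegral_subtype_comap (measurableSet_singleton 0).compl,
          restrict_compl_singleton]
    _ = ∫⁻ y : sphere (0 : E) 1 × Ioi (0 : ℝ), F ((y.2 : ℝ) • (y.1 : E))
          ∂μ.toSphere.prod (Measure.volumeIoiPow (Module.finrank ℝ E - 1)) := by
        rw [← μ.measurePreserving_homeomorphUnitSphereProd.lintegral_comp hFy]
        refine lintegral_congr fun x => ?_
        simp [smul_inv_smul₀ (norm_ne_zero_iff.2 x.2)]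
    _ = _ := by
        rw [lintegral_prod _ hFy.aemeasurable]
        refine lintegral_congr fun θ => ?_
        have hFθ : Measurable fun r : Ioi (0 : ℝ) => F ((r : ℝ) • (θ : E)) := hF.comp (by fun_prop)
        rw [Measure.volumeIoiPow, lintegral_withDensity_eq_lintegral_mul _ (by fun_prop) hFθ]
        exact lintegral_subtype_comap measurableSet_Ioi
          fun r => ENNReal.ofReal (r ^ (Module.finrank ℝ E - 1)) * F (r • (θ : E))

theorem setIntegral_comp_norm_eq_integral_radialMass (μ : Measure E) [μ.IsAddHaarMeasure]
    [Nontrivial E] (hg : Continuous g) (hg0 : ∀ r, 0 ≤ g r) (hΩm : MeasurableSet Ω)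
    (hΩs : StarConvex ℝ 0 Ω) (hΩb : Bornology.IsBounded Ω) :
    ∫ x in Ω, g ‖x‖ ∂μ =
      ∫ θ, radialMass (Module.finrank ℝ E - 1) g (radialFunction Ω θ) ∂μ.toSphere := by
  have hF : Measurable (Ω.indicator fun x => ENNReal.ofReal (g ‖x‖)) :=
    (by fun_prop : Measurable fun x : E => ENNReal.ofReal (g ‖x‖)).indicator hΩm
  have hmass : Measurable fun θ : sphere (0 : E) 1 =>
      radialMass (Module.finrank ℝ E - 1) g (radialFunction Ω θ) :=
    (continuous_radialMass hg).measurable.comp (measurable_radialFunction hΩm hΩs hΩb)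
  rw [integral_eq_lintegral_of_nonneg_ae (.of_forall fun x => hg0 _) (by fun_prop),
    ← lintegral_indicator hΩm, lintegral_eq_lintegral_toSphere_lintegral_Ioi μ hF,
    integral_eq_lintegral_of_nonneg_ae
      (.of_forall fun θ : sphere (0 : E) 1 => radialMass_nonneg hg0 (radialFunction_nonneg Ω θ))
      hmass.aestronglyMeasurable]
  congr 1
  exact lintegral_congr fun θ => lintegral_Ioi_indicator_comp_norm_smul hΩm hΩs hΩb hg hg0
    (norm_eq_of_mem_sphere θ) _

theorem setIntegral_smul_comp_norm_eq_integral_radialMass (μ : Measure E)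
    [μ.IsAddHaarMeasure] [Nontrivial E] (hg : Continuous g) (hg0 : ∀ r, 0 ≤ g r)
    (hΩm : MeasurableSet Ω) (hΩs : StarConvex ℝ 0 Ω) (hΩb : Bornology.IsBounded Ω) {t : ℝ}
    (ht : 0 < t) :
    ∫ x in t • Ω, g ‖x‖ ∂μ =
      ∫ θ, radialMass (Module.finrank ℝ E - 1) g (t * radialFunction Ω θ) ∂μ.toSphere := by
  have hts : StarConvex ℝ 0 (t • Ω) := by simpa using hΩs.smul t
  simp_rw [setIntegral_comp_norm_eq_integral_radialMass μ hg hg0 (hΩm.const_smul₀ t) hts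
    (hΩb.smul₀ t), radialFunction_smul ht]

lemma integrable_radialMass_mul_radialFunction (μ : Measure E) [μ.IsAddHaarMeasure]
    (hg : Continuous g) (hg0 : ∀ r, 0 ≤ g r) (hΩm : MeasurableSet Ω) (hΩs : StarConvex ℝ 0 Ω)
    (hΩb : Bornology.IsBounded Ω) {b : ℝ} (hb : ∀ θ : sphere (0 : E) 1, radialFunction Ω θ ≤ b)
    {t : ℝ} (ht : 0 ≤ t) (k : ℕ) :
    Integrable (fun θ : sphere (0 : E) 1 => radialMass k g (t * radialFunction Ω θ))
      μ.toSphere := by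
  refine .of_bound ((continuous_radialMass hg).measurable.comp
    ((measurable_radialFunction hΩm hΩs hΩb).const_mul t)).aestronglyMeasurable
    (radialMass k g (t * b)) (.of_forall fun θ => ?_)
  have hR := radialFunction_nonneg Ω θ
  rw [norm_of_nonneg (radialMass_nonneg hg0 (by positivity))]
  exact radialMass_mono hg hg0 (by positivity) (mul_le_mul_of_nonneg_left (hb θ) ht)

section ScaledRegion

variable (μ : Measure E) [μ.IsAddHaarMeasure] [Nontrivial E] (hg : Continuous g)
  (hg0 : ∀ r, 0 ≤ g r) (hΩm : MeasurableSet Ω) (hΩs : StarConvex ℝ 0 Ω) {a b : ℝ} (ha : 0 < a)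
  (h₁ : closedBall 0 a ⊆ Ω) (h₂ : Ω ⊆ closedBall 0 b) {s : Set ℝ} (hs : Convex ℝ s)
  (hs0 : s ⊆ Ioi 0)
include hg hg0 hΩm hΩs ha h₁ h₂ hs hs0

theorem concaveOn_setIntegral_sqrt_smul
    (hK : ∀ ρ ∈ Icc a b,
      ConcaveOn ℝ s fun p => radialMass (Module.finrank ℝ E - 1) g (√p * ρ)) :
    ConcaveOn ℝ s fun p => ∫ x in √p • Ω, g ‖x‖ ∂μ := by
  have hΩb := isBounded_closedBall.subset h₂
  have hR (θ : sphere (0 : E) 1) := radialFunction_mem_Icc ha h₁ h₂ (norm_eq_of_mem_sphere θ)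
  refine (integral_concaveOn_of_integrand_ae hs (.of_forall fun θ => hK _ (hR θ)) fun p _ =>
    integrable_radialMass_mul_radialFunction μ hg hg0 hΩm hΩs hΩb (fun θ => (hR θ).2)
      (sqrt_nonneg p) _).congr fun p hp => ?_
  exact (setIntegral_smul_comp_norm_eq_integral_radialMass μ hg hg0 hΩm hΩs hΩb
    (sqrt_pos.2 (hs0 hp))).symm

theorem convexOn_setIntegral_sqrt_smul
    (hK : ∀ ρ ∈ Icc a b,
      ConvexOn ℝ s fun p => radialMass (Module.finrank ℝ E - 1) g (√p * ρ)) :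
    ConvexOn ℝ s fun p => ∫ x in √p • Ω, g ‖x‖ ∂μ := by
  have hΩb := isBounded_closedBall.subset h₂
  have hR (θ : sphere (0 : E) 1) := radialFunction_mem_Icc ha h₁ h₂ (norm_eq_of_mem_sphere θ)
  refine (integral_convexOn_of_integrand_ae hs (.of_forall fun θ => hK _ (hR θ)) fun p _ =>
    integrable_radialMass_mul_radialFunction μ hg hg0 hΩm hΩs hΩb (fun θ => (hR θ).2)
      (sqrt_nonneg p) _).congr fun p hp => ?_
  exact (setIntegral_smul_comp_norm_eq_integral_radialMass μ hg hg0 hΩm hΩs hΩb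
    (sqrt_pos.2 (hs0 hp))).symm

end ScaledRegion

end Polar

noncomputable def gaussianRadialDensity (n : ℕ) (σ r : ℝ) : ℝ :=
  (2 * π * σ ^ 2) ^ (-(n : ℝ) / 2) * exp (-r ^ 2 / (2 * σ ^ 2))

noncomputable def sirpRadialDensity (n : ℕ) (μ : Measure ℝ) (r : ℝ) : ℝ :=
  ∫ σ, gaussianRadialDensity n σ r ∂μ

section Gaussian

variable {n : ℕ} {σ₁ σ₂ : ℝ} {μ : Measure ℝ}

lemma gaussianRadialDensity_nonneg (σ r : ℝ) : 0 ≤ gaussianRadialDensity n σ r := by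
  unfold gaussianRadialDensity; positivity

lemma gaussianRadialDensity_le (hσ₁ : 0 < σ₁) {σ : ℝ} (hσ : σ₁ ≤ σ) (r : ℝ) :
    gaussianRadialDensity n σ r ≤ (2 * π * σ₁ ^ 2) ^ (-(n : ℝ) / 2) := by
  have hexp : exp (-r ^ 2 / (2 * σ ^ 2)) ≤ 1 := exp_le_one_iff.2 <| by
    have := sq_nonneg r; have := sq_nonneg σ
    exact div_nonpos_of_nonpos_of_nonneg (by linarith) (by positivity)
  calc gaussianRadialDensity n σ r ≤ (2 * π * σ ^ 2) ^ (-(n : ℝ) / 2) :=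
        mul_le_of_le_one_right (by positivity) hexp
    _ ≤ (2 * π * σ₁ ^ 2) ^ (-(n : ℝ) / 2) := by
        apply rpow_le_rpow_of_nonpos (by positivity) _ (by simp [neg_div]; positivity)
        gcongr

lemma gaussianRadialDensity_sqrt_mul {p : ℝ} (hp : 0 ≤ p) (σ ρ : ℝ) :
    gaussianRadialDensity n σ (√p * ρ) =
      (2 * π * σ ^ 2) ^ (-(n : ℝ) / 2) * exp (-(ρ ^ 2 / (2 * σ ^ 2) * p)) := by
  rw [gaussianRadialDensity, mul_pow, sq_sqrt hp]
  ring_nf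

lemma sirpRadialDensity_nonneg (r : ℝ) : 0 ≤ sirpRadialDensity n μ r :=
  integral_nonneg fun σ => gaussianRadialDensity_nonneg σ r

variable [IsFiniteMeasure μ]

lemma integrable_gaussianRadialDensity (hσ₁ : 0 < σ₁) (hμ : ∀ᵐ σ ∂μ, σ₁ ≤ σ) (r : ℝ) :
    Integrable (fun σ => gaussianRadialDensity n σ r) μ := by
  refine Integrable.mono' (integrable_const ((2 * π * σ₁ ^ 2) ^ (-(n : ℝ) / 2)))
    (by unfold gaussianRadialDensity; fun_prop) ?_
  filter_upwards [hμ] with σ hσ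
  rw [norm_of_nonneg (gaussianRadialDensity_nonneg σ r)]
  exact gaussianRadialDensity_le hσ₁ hσ r

lemma continuous_sirpRadialDensity (hσ₁ : 0 < σ₁) (hμ : ∀ᵐ σ ∂μ, σ₁ ≤ σ) :
    Continuous (sirpRadialDensity n μ) := by
  refine continuous_of_dominated (fun r => (integrable_gaussianRadialDensity hσ₁ hμ r).1)
    (fun r => ?_) (integrable_const ((2 * π * σ₁ ^ 2) ^ (-(n : ℝ) / 2)))
    (.of_forall fun σ => by unfold gaussianRadialDensity; fun_prop)
  filter_upwards [hμ] with σ hσ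
  rw [norm_of_nonneg (gaussianRadialDensity_nonneg σ r)]
  exact gaussianRadialDensity_le hσ₁ hσ r

lemma antitoneOn_rpow_mul_sirpRadialDensity_sqrt_mul (hσ₁ : 0 < σ₁)
    (hμ : ∀ᵐ σ ∂μ, σ ∈ Icc σ₁ σ₂) (α ρ : ℝ) :
    AntitoneOn (fun p => p ^ α * sirpRadialDensity n μ (√p * ρ))
      {p | 0 < p ∧ 2 * α * σ₂ ^ 2 ≤ ρ ^ 2 * p} := by
  have hint (p : ℝ) : Integrable (fun σ => p ^ α * gaussianRadialDensity n σ (√p * ρ)) μ :=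
    (integrable_gaussianRadialDensity hσ₁ (hμ.mono fun σ hσ => hσ.1) _).const_mul _
  have := integral_antitoneOn_of_integrand_ae (s := {p | 0 < p ∧ 2 * α * σ₂ ^ 2 ≤ ρ ^ 2 * p})
    (f := fun σ p => p ^ α * gaussianRadialDensity n σ (√p * ρ)) ?_ fun p _ => hint p
  · refine this.congr fun p _ => ?_
    simp only [sirpRadialDensity, integral_const_mul]
  filter_upwards [hμ] with σ ⟨hσ₁σ, hσσ₂⟩
  have hσ : 0 < σ := hσ₁.trans_le hσ₁σ
  rintro p ⟨hp, hpα⟩ q ⟨hq, hqα⟩ hpq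
  have hexp := antitoneOn_rpow_mul_exp_neg_mul (α := α) (a := ρ ^ 2 / (2 * σ ^ 2))
    (by positivity) ⟨hp, ?_⟩ ⟨hq, ?_⟩ hpq
  · simp only [gaussianRadialDensity_sqrt_mul hp.le, gaussianRadialDensity_sqrt_mul hq.le]
    rw [mul_left_comm, mul_left_comm (p ^ α)]
    exact mul_le_mul_of_nonneg_left hexp (by positivity)
  all_goals
    rw [div_mul_eq_mul_div, le_div_iff₀ (by positivity)]
    rcases le_total 0 α with hα | hα
    · nlinarith [mul_le_mul_of_nonneg_left (pow_le_pow_left₀ hσ.le hσσ₂ 2) hα]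
    · nlinarith [mul_nonpos_of_nonpos_of_nonneg hα (sq_nonneg σ), sq_nonneg ρ]

lemma monotoneOn_rpow_mul_sirpRadialDensity_sqrt_mul (hσ₁ : 0 < σ₁)
    (hμ : ∀ᵐ σ ∂μ, σ ∈ Icc σ₁ σ₂) (α ρ : ℝ) :
    MonotoneOn (fun p => p ^ α * sirpRadialDensity n μ (√p * ρ))
      {p | 0 < p ∧ ρ ^ 2 * p ≤ 2 * α * σ₁ ^ 2} := by
  have hint (p : ℝ) : Integrable (fun σ => p ^ α * gaussianRadialDensity n σ (√p * ρ)) μ :=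
    (integrable_gaussianRadialDensity hσ₁ (hμ.mono fun σ hσ => hσ.1) _).const_mul _
  have := integral_monotoneOn_of_integrand_ae (s := {p | 0 < p ∧ ρ ^ 2 * p ≤ 2 * α * σ₁ ^ 2})
    (f := fun σ p => p ^ α * gaussianRadialDensity n σ (√p * ρ)) ?_ fun p _ => hint p
  · refine this.congr fun p _ => ?_
    simp only [sirpRadialDensity, integral_const_mul]
  filter_upwards [hμ] with σ ⟨hσ₁σ, _⟩
  have hσ : 0 < σ := hσ₁.trans_le hσ₁σ
  rintro p ⟨hp, hpα⟩ q ⟨hq, hqα⟩ hpq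
  have hexp := monotoneOn_rpow_mul_exp_neg_mul (α := α) (a := ρ ^ 2 / (2 * σ ^ 2))
    (by positivity) ⟨hp, ?_⟩ ⟨hq, ?_⟩ hpq
  · simp only [gaussianRadialDensity_sqrt_mul hp.le, gaussianRadialDensity_sqrt_mul hq.le]
    rw [mul_left_comm, mul_left_comm (q ^ α)]
    exact mul_le_mul_of_nonneg_left hexp (by positivity)
  all_goals
    rw [div_mul_eq_mul_div, div_le_iff₀ (by positivity)]
    have hα : 0 ≤ α := by nlinarith [mul_nonneg (sq_nonneg ρ) hp.le, pow_pos hσ₁ 2]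
    nlinarith [mul_le_mul_of_nonneg_left (pow_le_pow_left₀ hσ₁.le hσ₁σ 2) hα]

end Gaussian

section SIRPKernel

variable {n k : ℕ} {σ₁ σ₂ : ℝ} {μ : Measure ℝ} [IsFiniteMeasure μ]

lemma concaveOn_radialMass_sirpRadialDensity (hσ₁ : 0 < σ₁) (hμ : ∀ᵐ σ ∂μ, σ ∈ Icc σ₁ σ₂)
    {d ρ : ℝ} (hd : 0 < d) (hdρ : d ≤ ρ) :
    ConcaveOn ℝ {p | 0 < p ∧ ((k : ℝ) - 1) * σ₂ ^ 2 / d ^ 2 ≤ p}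
      fun p => radialMass k (sirpRadialDensity n μ) (√p * ρ) := by
  refine concaveOn_radialMass_sqrt_mul (continuous_sirpRadialDensity hσ₁ (hμ.mono fun _ h => h.1))
    ((convex_Ioi 0).inter (convex_Ici _)) (fun p hp => hp.1) (hd.le.trans hdρ)
    ((antitoneOn_rpow_mul_sirpRadialDensity_sqrt_mul hσ₁ hμ _ ρ).mono ?_)
  rintro p ⟨hp : 0 < p, hkp : _ ≤ p⟩
  rw [div_le_iff₀ (by positivity)] at hkp
  exact ⟨hp, by nlinarith [mul_le_mul_of_nonneg_left (pow_le_pow_left₀ hd.le hdρ 2) hp.le]⟩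

lemma convexOn_radialMass_sirpRadialDensity (hσ₁ : 0 < σ₁) (hμ : ∀ᵐ σ ∂μ, σ ∈ Icc σ₁ σ₂)
    {d ρ : ℝ} (hρ : 0 < ρ) (hρd : ρ ≤ d) :
    ConvexOn ℝ (Ioc 0 (((k : ℝ) - 1) * σ₁ ^ 2 / d ^ 2))
      fun p => radialMass k (sirpRadialDensity n μ) (√p * ρ) := by
  refine convexOn_radialMass_sqrt_mul (continuous_sirpRadialDensity hσ₁ (hμ.mono fun _ h => h.1))
    (convex_Ioc _ _) (fun p hp => hp.1) hρ.le
    ((monotoneOn_rpow_mul_sirpRadialDensity_sqrt_mul hσ₁ hμ _ ρ).mono ?_)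
  rintro p ⟨hp, hkp⟩
  rw [le_div_iff₀ (by nlinarith)] at hkp
  exact ⟨hp, by nlinarith [mul_le_mul_of_nonneg_left (pow_le_pow_left₀ hρ.le hρd 2) hp.le]⟩

end SIRPKernel

theorem ser_convexity_sirp_noise_general
    (n M : ℕ) (hn : 1 ≤ n)
    (σ₁ σ₂ : ℝ) (hσ₁ : 0 < σ₁)
    (μ : Measure ℝ) [IsProbabilityMeasure μ]
    (hsupp : μ (Icc σ₁ σ₂)ᶜ = 0)
    (f : EuclideanSpace ℝ (Fin n) → ℝ)
    (hf : ∀ x, f x = ∫ σ,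
      (2 * π * σ ^ 2) ^ (-(n : ℝ) / 2) * Real.exp (-‖x‖ ^ 2 / (2 * σ ^ 2)) ∂μ)
    (q : Fin M → ℝ) (hq : ∀ i, 0 ≤ q i)
    (Ω : Fin M → Set (EuclideanSpace ℝ (Fin n)))
    (hΩmeas : ∀ i, MeasurableSet (Ω i))
    (hΩstar : ∀ i, StarConvex ℝ (0 : EuclideanSpace ℝ (Fin n)) (Ω i))
    (dmin dmax : ℝ) (hdmin : 0 < dmin)
    (hball : ∀ i, Metric.closedBall (0 : EuclideanSpace ℝ (Fin n)) dmin ⊆ Ω i ∧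
      Ω i ⊆ Metric.closedBall (0 : EuclideanSpace ℝ (Fin n)) dmax)
    (Pe : ℝ → ℝ)
    (hPe : ∀ ps, Pe ps = 1 - ∑ i, q i * ∫ x in Real.sqrt ps • Ω i, f x) :
    ConvexOn ℝ {ps : ℝ | 0 < ps ∧ ((n : ℝ) - 2) * σ₂ ^ 2 / dmin ^ 2 ≤ ps} Pe ∧
      ConcaveOn ℝ (Ioc (0 : ℝ) (((n : ℝ) - 2) * σ₁ ^ 2 / dmax ^ 2)) Pe := by
  have hμ : ∀ᵐ σ ∂μ, σ ∈ Icc σ₁ σ₂ := ae_iff.2 hsupp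
  have hg := continuous_sirpRadialDensity (n := n) hσ₁ (hμ.mono fun _ h => h.1)
  have : Nontrivial (EuclideanSpace ℝ (Fin n)) := by
    have : Nonempty (Fin n) := ⟨⟨0, hn⟩⟩; infer_instance
  have hk : ((Module.finrank ℝ (EuclideanSpace ℝ (Fin n)) - 1 : ℕ) : ℝ) - 1 = n - 2 := by
    rw [finrank_euclideanSpace_fin, Nat.cast_sub hn]; ring
  obtain rfl : f = fun x => sirpRadialDensity n μ ‖x‖ := funext hf
  obtain rfl := funext hPe
  constructor
  · have hD : Convex ℝ {ps : ℝ | 0 < ps ∧ ((n : ℝ) - 2) * σ₂ ^ 2 / dmin ^ 2 ≤ ps} :=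
      (convex_Ioi 0).inter (convex_Ici _)
    refine (convexOn_const 1 hD).sub (concaveOn_finset_sum _ hD fun i _ =>
      (concaveOn_setIntegral_sqrt_smul volume hg sirpRadialDensity_nonneg (hΩmeas i) (hΩstar i)
        hdmin (hball i).1 (hball i).2 hD (fun p hp => hp.1) fun ρ hρ => ?_).smul (hq i))
    rw [← hk]
    exact concaveOn_radialMass_sirpRadialDensity hσ₁ hμ hdmin hρ.1
  · refine (concaveOn_const 1 (convex_Ioc _ _)).sub (convexOn_finset_sum _ (convex_Ioc _ _)
      fun i _ => (convexOn_setIntegral_sqrt_smul volume hg sirpRadialDensity_nonneg (hΩmeas i)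
        (hΩstar i) hdmin (hball i).1 (hball i).2 (convex_Ioc _ _) (fun p hp => hp.1)
        fun ρ hρ => ?_).smul (hq i))
    rw [← hk]
    exact convexOn_radialMass_sirpRadialDensity hσ₁ hμ (hdmin.trans_le hρ.1) hρ.2

/-- Under SIRP noise whose mixing distribution is supported in
`[σ₁, σ₂]`, the SER of a decoder with center-convex decision regions is convex
in the signal power on `{p_s | 0 < p_s ∧ (n-2)σ₂²/d_min² ≤ p_s}` and concave on
`(0, (n-2)σ₁²/d_max²]`. -/
theorem ser_convexity_sirp_noise
    (n M : ℕ) (hn : 1 ≤ n)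
    (σ₁ σ₂ : ℝ) (hσ₁ : 0 < σ₁) (hσ₁₂ : σ₁ ≤ σ₂)
    (μ : Measure ℝ) [IsProbabilityMeasure μ]
    (hsupp : μ (Icc σ₁ σ₂)ᶜ = 0)
    (f : EuclideanSpace ℝ (Fin n) → ℝ)
    (hf : ∀ x, f x = ∫ σ,
      (2 * π * σ ^ 2) ^ (-(n : ℝ) / 2) * Real.exp (-‖x‖ ^ 2 / (2 * σ ^ 2)) ∂μ)
    (q : Fin M → ℝ) (hq : ∀ i, 0 ≤ q i) (hqsum : ∑ i, q i = 1)
    (Ω : Fin M → Set (EuclideanSpace ℝ (Fin n)))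
    (hΩmeas : ∀ i, MeasurableSet (Ω i))
    (hΩstar : ∀ i, StarConvex ℝ (0 : EuclideanSpace ℝ (Fin n)) (Ω i))
    (dmin dmax : ℝ) (hdmin : 0 < dmin) (hdd : dmin ≤ dmax)
    (hball : ∀ i, Metric.closedBall (0 : EuclideanSpace ℝ (Fin n)) dmin ⊆ Ω i ∧
      Ω i ⊆ Metric.closedBall (0 : EuclideanSpace ℝ (Fin n)) dmax)
    (Pe : ℝ → ℝ)
    (hPe : ∀ ps, Pe ps = 1 - ∑ i, q i * ∫ x in Real.sqrt ps • Ω i, f x) :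
    ConvexOn ℝ {ps : ℝ | 0 < ps ∧ ((n : ℝ) - 2) * σ₂ ^ 2 / dmin ^ 2 ≤ ps} Pe ∧
      ConcaveOn ℝ (Ioc (0 : ℝ) (((n : ℝ) - 2) * σ₁ ^ 2 / dmax ^ 2)) Pe :=
  ser_convexity_sirp_noise_general n M hn σ₁ σ₂ hσ₁ μ hsupp f hf q hq Ω hΩmeas hΩstar dmin dmax
    hdmin hball Pe hPe
end

section
/- Let n ≥ 1 and suppose Metric.closedBall 0 d_min ⊆ Ω_i ⊆ Metric.closedBall 0 d_max for every i, with 0 < d_min ≤ d_max. Then the symbol error rate as a function of the signal amplitude A in the AWGN channel, namely P_e(A) = 1 − Σ_{i=1}^{M} q_i ∫_{A • Ω_i} (2π)^{−n/2} exp(−‖x‖²/2) dx, is convex on {A : A > 0 and A ≥ √(n−1)/d_min} and concave on (0, √(n−1)/d_max]. -/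
/-!
In polar coordinates the Gaussian mass of `A • Ω`, for `Ω` star-shaped about the origin with
radial function `ρ`, is `∫_{S^{n-1}} G (A * ρ θ) dθ` with `G u = ∫₀ᵘ r^(n-1) e^(-r²/2) dr`.
The density `r^(n-1) e^(-r²/2)` increases on `(0, √(n-1)]` and decreases afterwards, so `G` is
convex on `[0, √(n-1)]` and concave on `[√(n-1), ∞)`. As `dmin ≤ ρ θ ≤ dmax`, every
`A ↦ G (A * ρ θ)` is concave for `A ≥ √(n-1) / dmin` and convex for `A ≤ √(n-1) / dmax`;
both properties survive integration over the sphere and nonnegative combinations, and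
`Pe = 1 - ∑ ...` exchanges them.
-/

open MeasureTheory Real Set Pointwise Metric Module

section Radial

variable {E : Type*} [NormedAddCommGroup E] [NormedSpace ℝ E] {Ω : Set E} {θ : E} {t R : ℝ}

/-- For `Ω` star-shaped about `0` and bounded, and `‖θ‖ = 1`, the ray `ℝ≥0 • θ` meets `Ω` in
`[0, radialFun Ω θ)` or `[0, radialFun Ω θ]`. -/
noncomputable def radialFun (Ω : Set E) (θ : E) : ℝ := sSup {t : ℝ | 0 ≤ t ∧ t • θ ∈ Ω}

theorem radialFun_nonneg : 0 ≤ radialFun Ω θ :=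
  Real.sSup_nonneg fun _ ht ↦ ht.1

theorem bddAbove_ray (hR : Ω ⊆ closedBall 0 R) (hθ : ‖θ‖ = 1) :
    BddAbove {t : ℝ | 0 ≤ t ∧ t • θ ∈ Ω} :=
  ⟨R, fun t ht ↦ by simpa [norm_smul, hθ, abs_of_nonneg ht.1] using hR ht.2⟩

theorem le_radialFun (hR : Ω ⊆ closedBall 0 R) (hθ : ‖θ‖ = 1) (ht : 0 ≤ t)
    (hmem : t • θ ∈ Ω) : t ≤ radialFun Ω θ :=
  le_csSup (bddAbove_ray hR hθ) ⟨ht, hmem⟩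

theorem le_radialFun_of_closedBall_subset {d : ℝ} (hd : 0 ≤ d) (hdΩ : closedBall 0 d ⊆ Ω)
    (hR : Ω ⊆ closedBall 0 R) (hθ : ‖θ‖ = 1) : d ≤ radialFun Ω θ :=
  le_radialFun hR hθ hd (hdΩ (by simp [norm_smul, hθ, abs_of_nonneg hd]))

theorem radialFun_le (hR : Ω ⊆ closedBall 0 R) (hθ : ‖θ‖ = 1) (hR₀ : 0 ≤ R) :
    radialFun Ω θ ≤ R :=
  Real.sSup_le (fun t ht ↦ by simpa [norm_smul, hθ, abs_of_nonneg ht.1] using hR ht.2) hR₀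

theorem smul_mem_of_lt_radialFun (hΩ : StarConvex ℝ 0 Ω) (ht : 0 ≤ t)
    (hlt : t < radialFun Ω θ) : t • θ ∈ Ω := by
  have hne : {t : ℝ | 0 ≤ t ∧ t • θ ∈ Ω}.Nonempty := by
    by_contra h
    simp only [radialFun, not_nonempty_iff_eq_empty.1 h, Real.sSup_empty] at hlt
    linarith
  obtain ⟨s, ⟨-, hs⟩, hts⟩ := exists_lt_of_lt_csSup hne hlt
  have hs₀ : 0 < s := ht.trans_lt hts
  simpa [smul_smul, div_mul_cancel₀ _ hs₀.ne'] using
    hΩ.smul_mem hs (div_nonneg ht hs₀.le) ((div_le_one hs₀).2 hts.le)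

theorem radialFun_smul_set {A : ℝ} (hA : 0 < A) :
    radialFun (A • Ω) θ = A * radialFun Ω θ := by
  have hray : {t : ℝ | 0 ≤ t ∧ t • θ ∈ A • Ω} = A • {t : ℝ | 0 ≤ t ∧ t • θ ∈ Ω} := by
    ext t
    simp only [mem_smul_set_iff_inv_smul_mem₀ hA.ne', mem_ofPred_eq, smul_smul, smul_eq_mul]
    rw [mul_nonneg_iff_of_pos_left (inv_pos.2 hA)]
  rw [radialFun, hray, Real.sSup_smul_of_nonneg hA.le, smul_eq_mul, radialFun]

theorem smul_set_subset_closedBall (hR : Ω ⊆ closedBall 0 R) (A : ℝ) :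
    A • Ω ⊆ closedBall 0 (‖A‖ * R) := by
  rintro _ ⟨x, hx, rfl⟩
  simpa [norm_smul] using
    mul_le_mul_of_nonneg_left (mem_closedBall_zero_iff.1 (hR hx)) (norm_nonneg A)

theorem ray_ae_eq_Ioo_radialFun (hΩ : StarConvex ℝ 0 Ω) (hR : Ω ⊆ closedBall 0 R)
    (hθ : ‖θ‖ = 1) :
    (Ioi 0 ∩ {r : ℝ | r • θ ∈ Ω} : Set ℝ) =ᵐ[volume] Ioo 0 (radialFun Ω θ) := by
  have h₁ : Ioo 0 (radialFun Ω θ) ⊆ Ioi 0 ∩ {r : ℝ | r • θ ∈ Ω} := fun r hr ↦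
    ⟨hr.1, smul_mem_of_lt_radialFun hΩ hr.1.le hr.2⟩
  have h₂ : Ioi 0 ∩ {r : ℝ | r • θ ∈ Ω} ⊆ Ioc 0 (radialFun Ω θ) := fun r hr ↦
    ⟨hr.1, le_radialFun hR hθ (le_of_lt hr.1) hr.2⟩
  exact (h₂.eventuallyLE.trans Ioo_ae_eq_Ioc.symm.le).antisymm h₁.eventuallyLE

theorem setIntegral_Ioi_indicator_ray {F : Type*} [NormedAddCommGroup F] [NormedSpace ℝ F]
    [MeasurableSpace E] [BorelSpace E] (k : ℕ) (f : ℝ → F) (hΩm : MeasurableSet Ω)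
    (hΩ : StarConvex ℝ 0 Ω) (hR : Ω ⊆ closedBall 0 R) (hθ : ‖θ‖ = 1) :
    ∫ r in Ioi (0 : ℝ), r ^ k • Ω.indicator (fun x ↦ f ‖x‖) (r • θ) =
      ∫ r in (0 : ℝ)..radialFun Ω θ, r ^ k • f r := by
  have hray : MeasurableSet {r : ℝ | r • θ ∈ Ω} := hΩm.preimage (by fun_prop)
  calc ∫ r in Ioi (0 : ℝ), r ^ k • Ω.indicator (fun x ↦ f ‖x‖) (r • θ)
      = ∫ r in Ioi (0 : ℝ), {r : ℝ | r • θ ∈ Ω}.indicator (fun r ↦ r ^ k • f ‖r • θ‖) r := by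
        congr 1 with r
        by_cases hr : r • θ ∈ Ω <;> simp [hr]
    _ = ∫ r in Ioo 0 (radialFun Ω θ), r ^ k • f ‖r • θ‖ := by
        rw [setIntegral_indicator hray, setIntegral_congr_set (ray_ae_eq_Ioo_radialFun hΩ hR hθ)]
    _ = ∫ r in (0 : ℝ)..radialFun Ω θ, r ^ k • f r := by
        rw [intervalIntegral.integral_of_le radialFun_nonneg, integral_Ioc_eq_integral_Ioo]
        refine setIntegral_congr_fun measurableSet_Ioo fun r hr ↦ ?_
        rw [norm_smul, hθ, mul_one, Real.norm_of_nonneg hr.1.le]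

end Radial

section Polar

variable {E : Type*} [NormedAddCommGroup E] [NormedSpace ℝ E] [FiniteDimensional ℝ E]
  [MeasurableSpace E] [BorelSpace E] (μ : Measure E) [μ.IsAddHaarMeasure]
  {F : Type*} [NormedAddCommGroup F]

theorem MeasureTheory.Measure.integral_volumeIoiPow [NormedSpace ℝ F] (k : ℕ) (g : ℝ → F) :
    ∫ r : Ioi (0 : ℝ), g r ∂Measure.volumeIoiPow k = ∫ r in Ioi (0 : ℝ), r ^ k • g r := by
  simp only [Measure.volumeIoiPow, ENNReal.ofReal]
  rw [integral_withDensity_eq_integral_smul (measurable_subtype_coe.pow_const _).real_toNNReal,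
    integral_subtype_comap measurableSet_Ioi fun r ↦ Real.toNNReal (r ^ k) • g r]
  refine setIntegral_congr_fun measurableSet_Ioi fun r hr ↦ ?_
  rw [NNReal.smul_def, Real.coe_toNNReal _ (pow_nonneg (le_of_lt hr) _)]

theorem integrable_comp_polar {f : E → F} (hf : Integrable f μ) :
    Integrable (fun y : sphere (0 : E) 1 × Ioi (0 : ℝ) ↦ f ((y.2 : ℝ) • (y.1 : E)))
      (μ.toSphere.prod (.volumeIoiPow (finrank ℝ E - 1))) := by
  rw [← μ.measurePreserving_homeomorphUnitSphereProd.integrable_comp_emb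
    (Homeomorph.measurableEmbedding _)]
  refine ((integrableOn_iff_comap_subtypeVal (measurableSet_singleton (0 : E)).compl).1
    hf.integrableOn).congr (ae_of_all _ fun x ↦ ?_)
  simp [smul_inv_smul₀ (norm_ne_zero_iff.2 x.2)]

theorem integral_eq_integral_sphere_integral_Ioi [Nontrivial E] [NormedSpace ℝ F]
    [CompleteSpace F] {f : E → F} (hf : Integrable f μ) :
    ∫ x, f x ∂μ = ∫ θ : sphere (0 : E) 1,
      (∫ r in Ioi (0 : ℝ), r ^ (finrank ℝ E - 1) • f (r • (θ : E))) ∂μ.toSphere := by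
  calc ∫ x, f x ∂μ = ∫ x : ({(0 : E)}ᶜ : Set E), f x ∂μ.comap (↑) := by
        rw [integral_subtype_comap (measurableSet_singleton _).compl, restrict_compl_singleton]
    _ = ∫ y, f ((y.2 : ℝ) • (y.1 : E))
          ∂μ.toSphere.prod (.volumeIoiPow (finrank ℝ E - 1)) := by
        rw [← μ.measurePreserving_homeomorphUnitSphereProd.integral_comp
          (Homeomorph.measurableEmbedding _)]
        refine integral_congr_ae (ae_of_all _ fun x ↦ ?_)
        simp [smul_inv_smul₀ (norm_ne_zero_iff.2 x.2)]
    _ = _ := by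
        rw [integral_prod _ (integrable_comp_polar μ hf)]
        exact integral_congr_ae (ae_of_all _ fun θ ↦
          Measure.integral_volumeIoiPow _ fun r ↦ f (r • (θ : E)))

theorem integrable_sphere_integral_Ioi [NormedSpace ℝ F] [CompleteSpace F] {f : E → F}
    (hf : Integrable f μ) :
    Integrable (fun θ : sphere (0 : E) 1 ↦
      ∫ r in Ioi (0 : ℝ), r ^ (finrank ℝ E - 1) • f (r • (θ : E))) μ.toSphere :=
  (integrable_comp_polar μ hf).integral_prod_left.congr (ae_of_all _ fun θ ↦
    Measure.integral_volumeIoiPow _ fun r ↦ f (r • (θ : E)))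

end Polar

section StarConvexPolar

variable {E : Type*} [NormedAddCommGroup E] [NormedSpace ℝ E] [FiniteDimensional ℝ E]
  [MeasurableSpace E] [BorelSpace E] (μ : Measure E) [μ.IsAddHaarMeasure]
  {F : Type*} [NormedAddCommGroup F] [NormedSpace ℝ F] [CompleteSpace F]
  {Ω : Set E} {R : ℝ} {f : ℝ → F}

theorem setIntegral_fun_norm_starConvex [Nontrivial E] (hf : Integrable (fun x ↦ f ‖x‖) μ)
    (hΩm : MeasurableSet Ω) (hΩ : StarConvex ℝ 0 Ω) (hR : Ω ⊆ closedBall 0 R) :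
    ∫ x in Ω, f ‖x‖ ∂μ = ∫ θ : sphere (0 : E) 1,
      (∫ r in (0 : ℝ)..radialFun Ω θ, r ^ (finrank ℝ E - 1) • f r) ∂μ.toSphere := by
  rw [← integral_indicator hΩm, integral_eq_integral_sphere_integral_Ioi μ (hf.indicator hΩm)]
  exact integral_congr_ae (ae_of_all _ fun θ ↦ setIntegral_Ioi_indicator_ray _ f hΩm hΩ hR
    (mem_sphere_zero_iff_norm.1 θ.2))

theorem integrable_intervalIntegral_radialFun (hf : Integrable (fun x ↦ f ‖x‖) μ)
    (hΩm : MeasurableSet Ω) (hΩ : StarConvex ℝ 0 Ω) (hR : Ω ⊆ closedBall 0 R) :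
    Integrable (fun θ : sphere (0 : E) 1 ↦
      ∫ r in (0 : ℝ)..radialFun Ω θ, r ^ (finrank ℝ E - 1) • f r) μ.toSphere :=
  (integrable_sphere_integral_Ioi μ (hf.indicator hΩm)).congr (ae_of_all _ fun θ ↦
    setIntegral_Ioi_indicator_ray _ f hΩm hΩ hR (mem_sphere_zero_iff_norm.1 θ.2))

end StarConvexPolar

section RadialGaussian

variable (m : ℕ)

noncomputable def radialGaussian (r : ℝ) : ℝ := r ^ m * exp (-r ^ 2 / 2)

noncomputable def radialGaussianIntegral (u : ℝ) : ℝ := ∫ r in (0 : ℝ)..u, radialGaussian m r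

theorem radialGaussian_eq_exp {u : ℝ} (hu : 0 < u) :
    radialGaussian m u = exp (m * log u - u ^ 2 / 2) := by
  rw [radialGaussian, exp_sub, exp_nat_mul, exp_log hu, neg_div, exp_neg, ← div_eq_mul_inv]

theorem hasDerivAt_log_radialGaussian {u : ℝ} (hu : 0 < u) :
    HasDerivAt (fun u ↦ m * log u - u ^ 2 / 2) ((m - u ^ 2) / u) u := by
  refine (((hasDerivAt_log hu.ne').const_mul (m : ℝ)).sub
    ((hasDerivAt_pow 2 u).div_const 2)).congr_deriv ?_
  field_simp
  ring

theorem monotoneOn_radialGaussian : MonotoneOn (radialGaussian m) (Ioc 0 √m) := by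
  have hlog : MonotoneOn (fun u ↦ m * log u - u ^ 2 / 2) (Ioc 0 √m) := by
    refine monotoneOn_of_hasDerivWithinAt_nonneg (convex_Ioc _ _)
      (fun u hu ↦ (hasDerivAt_log_radialGaussian m hu.1).continuousAt.continuousWithinAt)
      (fun u hu ↦ (hasDerivAt_log_radialGaussian m (interior_subset hu).1).hasDerivWithinAt)
      fun u hu ↦ ?_
    rw [interior_Ioc] at hu
    have : u ^ 2 ≤ m := (Real.le_sqrt hu.1.le (Nat.cast_nonneg m)).1 hu.2.le
    exact div_nonneg (by linarith) hu.1.le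
  intro u hu v hv huv
  rw [radialGaussian_eq_exp m hu.1, radialGaussian_eq_exp m hv.1]
  exact exp_le_exp.2 (hlog hu hv huv)

theorem antitoneOn_radialGaussian : AntitoneOn (radialGaussian m) (Ici √m ∩ Ioi 0) := by
  have hlog : AntitoneOn (fun u ↦ m * log u - u ^ 2 / 2) (Ici √m ∩ Ioi 0) := by
    refine antitoneOn_of_hasDerivWithinAt_nonpos ((convex_Ici _).inter (convex_Ioi _))
      (fun u hu ↦ (hasDerivAt_log_radialGaussian m hu.2).continuousAt.continuousWithinAt)
      (fun u hu ↦ (hasDerivAt_log_radialGaussian m (interior_subset hu).2).hasDerivWithinAt)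
      fun u hu ↦ ?_
    obtain ⟨hmu, hu₀⟩ := interior_subset hu
    have : m ≤ u ^ 2 := (Real.sqrt_le_left hu₀.le).1 hmu
    exact div_nonpos_of_nonpos_of_nonneg (by linarith) hu₀.le
  intro u hu v hv huv
  rw [radialGaussian_eq_exp m hu.2, radialGaussian_eq_exp m hv.2]
  exact exp_le_exp.2 (hlog hu hv huv)

theorem hasDerivAt_radialGaussianIntegral (u : ℝ) :
    HasDerivAt (radialGaussianIntegral m) (radialGaussian m u) u :=
  ((by unfold radialGaussian; fun_prop : Continuous (radialGaussian m)).integral_hasStrictDerivAt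
    0 u).hasDerivAt

theorem deriv_radialGaussianIntegral : deriv (radialGaussianIntegral m) = radialGaussian m :=
  funext fun u ↦ (hasDerivAt_radialGaussianIntegral m u).deriv

theorem differentiable_radialGaussianIntegral : Differentiable ℝ (radialGaussianIntegral m) :=
  fun u ↦ (hasDerivAt_radialGaussianIntegral m u).differentiableAt

theorem convexOn_radialGaussianIntegral : ConvexOn ℝ (Icc 0 √m) (radialGaussianIntegral m) := by
  refine MonotoneOn.convexOn_of_deriv (convex_Icc _ _)
    (differentiable_radialGaussianIntegral m).continuous.continuousOn
    (differentiable_radialGaussianIntegral m).differentiableOn ?_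
  rw [deriv_radialGaussianIntegral, interior_Icc]
  exact (monotoneOn_radialGaussian m).mono Ioo_subset_Ioc_self

theorem concaveOn_radialGaussianIntegral :
    ConcaveOn ℝ (Ici √m) (radialGaussianIntegral m) := by
  refine AntitoneOn.concaveOn_of_deriv (convex_Ici _)
    (differentiable_radialGaussianIntegral m).continuous.continuousOn
    (differentiable_radialGaussianIntegral m).differentiableOn ?_
  rw [deriv_radialGaussianIntegral, interior_Ici]
  exact (antitoneOn_radialGaussian m).mono fun u hu ↦
    ⟨mem_Ici.2 (le_of_lt hu), (Real.sqrt_nonneg _).trans_lt hu⟩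

variable {d ρ : ℝ}

theorem convexOn_radialGaussianIntegral_mul (hρ₀ : 0 ≤ ρ) (hρ : ρ ≤ d) :
    ConvexOn ℝ (Icc 0 (√m / d)) fun A ↦ radialGaussianIntegral m (A * ρ) := by
  refine ((convexOn_radialGaussianIntegral m).comp_linearMap (LinearMap.mulRight ℝ ρ)).subset
    (fun A hA ↦ ⟨mul_nonneg hA.1 hρ₀, ?_⟩) (convex_Icc _ _)
  calc A * ρ ≤ A * d := mul_le_mul_of_nonneg_left hρ hA.1
    _ ≤ √m := mul_le_of_le_div₀ (Real.sqrt_nonneg _) (hρ₀.trans hρ) hA.2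

theorem concaveOn_radialGaussianIntegral_mul (hd : 0 < d) (hρ : d ≤ ρ) :
    ConcaveOn ℝ (Ici (√m / d)) fun A ↦ radialGaussianIntegral m (A * ρ) := by
  refine ((concaveOn_radialGaussianIntegral m).comp_linearMap (LinearMap.mulRight ℝ ρ)).subset
    (fun A (hA : √m / d ≤ A) ↦ ?_) (convex_Ici _)
  have hA₀ : 0 ≤ A := (div_nonneg (Real.sqrt_nonneg _) hd.le).trans hA
  calc √m ≤ A * d := (div_le_iff₀ hd).1 hA
    _ ≤ A * ρ := mul_le_mul_of_nonneg_left hρ hA₀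

end RadialGaussian

section ConvexOnSum

variable {𝕜 E β ι : Type*} [Semiring 𝕜] [PartialOrder 𝕜] [AddCommMonoid E] [SMul 𝕜 E]
  [AddCommMonoid β] [PartialOrder β] [IsOrderedAddMonoid β] [Module 𝕜 β] {s : Set E}

theorem ConvexOn.sum (t : Finset ι) {f : ι → E → β} (hs : Convex 𝕜 s)
    (hf : ∀ i ∈ t, ConvexOn 𝕜 s (f i)) : ConvexOn 𝕜 s fun x ↦ ∑ i ∈ t, f i x := by
  classical
  induction t using Finset.induction with
  | empty => simpa using convexOn_const (0 : β) hs
  | insert i t hi ih =>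
    simp only [Finset.sum_insert hi]
    exact (hf i (t.mem_insert_self i)).add (ih fun j hj ↦ hf j (Finset.mem_insert_of_mem hj))

theorem ConcaveOn.sum (t : Finset ι) {f : ι → E → β} (hs : Convex 𝕜 s)
    (hf : ∀ i ∈ t, ConcaveOn 𝕜 s (f i)) : ConcaveOn 𝕜 s fun x ↦ ∑ i ∈ t, f i x :=
  ConvexOn.sum (β := βᵒᵈ) t hs fun i hi ↦ (hf i hi).dual

end ConvexOnSum

section ConvexOnIntegral

variable {α E : Type*} [MeasurableSpace α] {μ : Measure α} [AddCommGroup E] [Module ℝ E]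
  {s : Set E} {f : α → E → ℝ}

theorem convexOn_integral (hs : Convex ℝ s) (hf : ∀ a, ConvexOn ℝ s (f a))
    (hint : ∀ x ∈ s, Integrable (f · x) μ) : ConvexOn ℝ s fun x ↦ ∫ a, f a x ∂μ := by
  refine ⟨hs, fun x hx y hy c d hc hd hcd ↦ ?_⟩
  have hcx := (hint x hx).const_mul c
  have hdy := (hint y hy).const_mul d
  calc ∫ a, f a (c • x + d • y) ∂μ ≤ ∫ a, (c * f a x + d * f a y) ∂μ :=
        integral_mono (hint _ (hs hx hy hc hd hcd)) (hcx.add hdy)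
          fun a ↦ (hf a).2 hx hy hc hd hcd
    _ = c • ∫ a, f a x ∂μ + d • ∫ a, f a y ∂μ := by
        rw [integral_add hcx hdy, integral_const_mul, integral_const_mul, smul_eq_mul,
          smul_eq_mul]

theorem concaveOn_integral (hs : Convex ℝ s) (hf : ∀ a, ConcaveOn ℝ s (f a))
    (hint : ∀ x ∈ s, Integrable (f · x) μ) : ConcaveOn ℝ s fun x ↦ ∫ a, f a x ∂μ := by
  refine neg_convexOn_iff.1 ((convexOn_integral hs (fun a ↦ (hf a).neg)
    fun x hx ↦ (hint x hx).neg).congr fun x _ ↦ ?_)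
  simp [integral_neg]

end ConvexOnIntegral

section GaussianStarConvex

variable {E : Type*} [NormedAddCommGroup E] [NormedSpace ℝ E] [FiniteDimensional ℝ E]
  [MeasurableSpace E] [BorelSpace E] [Nontrivial E] (μ : Measure E) [μ.IsAddHaarMeasure]
  {Ω : Set E} {R : ℝ}

theorem integrable_exp_neg_sq_norm_div_two :
    Integrable (fun x : E ↦ exp (-‖x‖ ^ 2 / 2)) μ := by
  rw [integrable_fun_norm_addHaar μ (f := fun r ↦ exp (-r ^ 2 / 2))]
  have hk : (-1 : ℝ) < (finrank ℝ E - 1 : ℕ) :=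
    neg_one_lt_zero.trans_le (Nat.cast_nonneg _)
  refine (integrableOn_rpow_mul_exp_neg_mul_sq (b := 1 / 2) (by norm_num) hk).congr_fun
    (fun r _ ↦ ?_) measurableSet_Ioi
  simp only [rpow_natCast, smul_eq_mul]
  ring_nf

theorem setIntegral_smul_exp_neg_sq_norm_div_two (hΩm : MeasurableSet Ω)
    (hΩ : StarConvex ℝ 0 Ω) (hR : Ω ⊆ closedBall 0 R) {A : ℝ} (hA : 0 < A) :
    ∫ x in A • Ω, exp (-‖x‖ ^ 2 / 2) ∂μ = ∫ θ : sphere (0 : E) 1,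
      radialGaussianIntegral (finrank ℝ E - 1) (A * radialFun Ω θ) ∂μ.toSphere := by
  rw [setIntegral_fun_norm_starConvex μ (f := fun r ↦ exp (-r ^ 2 / 2))
    (integrable_exp_neg_sq_norm_div_two μ) (hΩm.const_smul₀ A) (by simpa using hΩ.smul A)
    (smul_set_subset_closedBall hR A)]
  simp only [radialFun_smul_set hA]
  rfl

theorem integrable_radialGaussianIntegral_radialFun (hΩm : MeasurableSet Ω)
    (hΩ : StarConvex ℝ 0 Ω) (hR : Ω ⊆ closedBall 0 R) {A : ℝ} (hA : 0 < A) :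
    Integrable (fun θ : sphere (0 : E) 1 ↦
      radialGaussianIntegral (finrank ℝ E - 1) (A * radialFun Ω θ)) μ.toSphere := by
  have h := integrable_intervalIntegral_radialFun μ (f := fun r ↦ exp (-r ^ 2 / 2))
    (integrable_exp_neg_sq_norm_div_two μ) (hΩm.const_smul₀ A) (by simpa using hΩ.smul A)
    (smul_set_subset_closedBall hR A)
  simp only [radialFun_smul_set hA] at h
  exact h

theorem concaveOn_setIntegral_smul_exp_neg_sq_norm_div_two (hΩm : MeasurableSet Ω)
    (hΩ : StarConvex ℝ 0 Ω) {d : ℝ} (hd : 0 < d) (hdΩ : closedBall 0 d ⊆ Ω)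
    (hR : Ω ⊆ closedBall 0 R) :
    ConcaveOn ℝ (Ioi 0 ∩ Ici (√(finrank ℝ E - 1 : ℕ) / d))
      fun A ↦ ∫ x in A • Ω, exp (-‖x‖ ^ 2 / 2) ∂μ := by
  have hS : Convex ℝ (Ioi 0 ∩ Ici (√(finrank ℝ E - 1 : ℕ) / d)) :=
    (convex_Ioi 0).inter (convex_Ici _)
  refine (concaveOn_integral hS (fun θ ↦ ?_)
    fun A hA ↦ integrable_radialGaussianIntegral_radialFun μ hΩm hΩ hR hA.1).congr
    fun A hA ↦ (setIntegral_smul_exp_neg_sq_norm_div_two μ hΩm hΩ hR hA.1).symm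
  exact (concaveOn_radialGaussianIntegral_mul _ hd (le_radialFun_of_closedBall_subset hd.le hdΩ
    hR (mem_sphere_zero_iff_norm.1 θ.2))).subset inter_subset_right hS

theorem convexOn_setIntegral_smul_exp_neg_sq_norm_div_two (hΩm : MeasurableSet Ω)
    (hΩ : StarConvex ℝ 0 Ω) (hR : Ω ⊆ closedBall 0 R) (hR₀ : 0 ≤ R) :
    ConvexOn ℝ (Ioc 0 (√(finrank ℝ E - 1 : ℕ) / R))
      fun A ↦ ∫ x in A • Ω, exp (-‖x‖ ^ 2 / 2) ∂μ := by
  refine (convexOn_integral (convex_Ioc _ _) (fun θ ↦ ?_)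
    fun A hA ↦ integrable_radialGaussianIntegral_radialFun μ hΩm hΩ hR hA.1).congr
    fun A hA ↦ (setIntegral_smul_exp_neg_sq_norm_div_two μ hΩm hΩ hR hA.1).symm
  exact (convexOn_radialGaussianIntegral_mul _ radialFun_nonneg
    (radialFun_le hR (mem_sphere_zero_iff_norm.1 θ.2) hR₀)).subset Ioc_subset_Icc_self
    (convex_Ioc _ _)

end GaussianStarConvex

theorem ser_convexity_in_amplitude_awgn_general
    (n M : ℕ) (hn : 1 ≤ n)
    (q : Fin M → ℝ) (hq : ∀ i, 0 ≤ q i)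
    (Ω : Fin M → Set (EuclideanSpace ℝ (Fin n)))
    (hΩmeas : ∀ i, MeasurableSet (Ω i))
    (hΩstar : ∀ i, StarConvex ℝ (0 : EuclideanSpace ℝ (Fin n)) (Ω i))
    (dmin dmax : ℝ) (hdmin : 0 < dmin) (hdd : dmin ≤ dmax)
    (hball : ∀ i, Metric.closedBall (0 : EuclideanSpace ℝ (Fin n)) dmin ⊆ Ω i ∧
      Ω i ⊆ Metric.closedBall (0 : EuclideanSpace ℝ (Fin n)) dmax)
    (Pe : ℝ → ℝ)
    (hPe : ∀ A, Pe A = 1 - ∑ i, q i * ∫ x in A • Ω i,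
      (2 * π) ^ (-(n : ℝ) / 2) * Real.exp (-‖x‖ ^ 2 / 2)) :
    ConvexOn ℝ {A : ℝ | 0 < A ∧ Real.sqrt ((n : ℝ) - 1) / dmin ≤ A} Pe ∧
      ConcaveOn ℝ (Ioc (0 : ℝ) (Real.sqrt ((n : ℝ) - 1) / dmax)) Pe := by
  have : Nontrivial (EuclideanSpace ℝ (Fin n)) :=
    Module.nontrivial_of_finrank_pos (R := ℝ) (by rw [finrank_euclideanSpace_fin]; omega)
  have hdim : ((finrank ℝ (EuclideanSpace ℝ (Fin n)) - 1 : ℕ) : ℝ) = n - 1 := by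
    rw [finrank_euclideanSpace_fin, Nat.cast_sub hn, Nat.cast_one]
  have hc : (0 : ℝ) ≤ (2 * π) ^ (-(n : ℝ) / 2) := by positivity
  have hPe' : Pe = fun A ↦ 1 - ∑ i, q i • (2 * π) ^ (-(n : ℝ) / 2) •
      ∫ x in A • Ω i, exp (-‖x‖ ^ 2 / 2) := by
    funext A
    simp only [hPe, integral_const_mul, smul_eq_mul]
  rw [hPe', ← hdim]
  constructor
  · exact (convexOn_const 1 ((convex_Ioi 0).inter (convex_Ici _))).sub
      (ConcaveOn.sum _ ((convex_Ioi 0).inter (convex_Ici _)) fun i _ ↦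
        ((concaveOn_setIntegral_smul_exp_neg_sq_norm_div_two volume (hΩmeas i) (hΩstar i) hdmin
          (hball i).1 (hball i).2).smul hc).smul (hq i))
  · exact (concaveOn_const 1 (convex_Ioc _ _)).sub
      (ConvexOn.sum _ (convex_Ioc _ _) fun i _ ↦
        ((convexOn_setIntegral_smul_exp_neg_sq_norm_div_two volume (hΩmeas i) (hΩstar i)
          (hball i).2 (hdmin.le.trans hdd)).smul hc).smul (hq i))

/-- In the AWGN channel, the SER of a decoder with center-convex
decision regions, as a function of the signal amplitude `A`, is convex on
`{A | 0 < A ∧ √(n-1)/d_min ≤ A}` and concave on `(0, √(n-1)/d_max]`. -/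
theorem ser_convexity_in_amplitude_awgn
    (n M : ℕ) (hn : 1 ≤ n)
    (q : Fin M → ℝ) (hq : ∀ i, 0 ≤ q i) (hqsum : ∑ i, q i = 1)
    (Ω : Fin M → Set (EuclideanSpace ℝ (Fin n)))
    (hΩmeas : ∀ i, MeasurableSet (Ω i))
    (hΩstar : ∀ i, StarConvex ℝ (0 : EuclideanSpace ℝ (Fin n)) (Ω i))
    (dmin dmax : ℝ) (hdmin : 0 < dmin) (hdd : dmin ≤ dmax)
    (hball : ∀ i, Metric.closedBall (0 : EuclideanSpace ℝ (Fin n)) dmin ⊆ Ω i ∧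
      Ω i ⊆ Metric.closedBall (0 : EuclideanSpace ℝ (Fin n)) dmax)
    (Pe : ℝ → ℝ)
    (hPe : ∀ A, Pe A = 1 - ∑ i, q i * ∫ x in A • Ω i,
      (2 * π) ^ (-(n : ℝ) / 2) * Real.exp (-‖x‖ ^ 2 / 2)) :
    ConvexOn ℝ {A : ℝ | 0 < A ∧ Real.sqrt ((n : ℝ) - 1) / dmin ≤ A} Pe ∧
      ConcaveOn ℝ (Ioc (0 : ℝ) (Real.sqrt ((n : ℝ) - 1) / dmax)) Pe :=
  ser_convexity_in_amplitude_awgn_general n M hn q hq Ω hΩmeas hΩstar dmin dmax hdmin hdd hball Pe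
    hPe
end
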